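/- arXiv:1603.08970 — 3 statements merged into one kernel-verified Lean document; each statement's English description precedes it below -/
import Mathlib

section
/- Let P₁⁻¹ = (A + τ₁I)⁻¹ and P₂⁻¹ = (A + τ₂I)⁻¹ with τ₁ ≠ τ₂ and both shifted matrices invertible. Then for all positive integers m, n and every vector v, the vector P₁⁻ᵐP₂⁻ⁿv lies in the sum of the Krylov subspaces 𝒦ₘ(P₁⁻¹, P₁⁻¹v) + 𝒦ₙ(P₂⁻¹, P₂⁻¹v), where 𝒦ₖ(B, w) := span{w, Bw, …, B^{k−1}w}. -/
/-!
The resolvent identity `P₁⁻¹ P₂⁻¹ = (τ₂ - τ₁)⁻¹ (P₁⁻¹ - P₂⁻¹)` lowers the total degree of a mixed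
monomial `P₁⁻ʲ P₂⁻ᵏ` by one, trading it for `P₁⁻ʲ P₂⁻⁽ᵏ⁻¹⁾` and `P₁⁻⁽ʲ⁻¹⁾ P₂⁻ᵏ`. Iterating this
leaves only pure powers `P₁⁻ⁱ` with `1 ≤ i ≤ m` and `P₂⁻ⁱ` with `1 ≤ i ≤ p`.
-/

open Matrix

/-- The Krylov subspace 𝒦ₘ(B, w) = span{w, Bw, …, B^{m−1}w}. -/
def krylov {K : Type*} [Field K] {n : ℕ} (m : ℕ)
    (B : Matrix (Fin n) (Fin n) K) (w : Fin n → K) : Submodule K (Fin n → K) :=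
  Submodule.span K (Set.range fun k : Fin m => (B ^ (k : ℕ)) *ᵥ w)

theorem pow_succ_mul_pow_succ_of_mul_eq_smul_sub {S R : Type*} [CommSemiring S] [Ring R]
    [Algebra S R] {a b : R} {c : S} (h : a * b = c • (a - b)) (j k : ℕ) :
    a ^ (j + 1) * b ^ (k + 1) = c • (a ^ (j + 1) * b ^ k - a ^ j * b ^ (k + 1)) :=
  calc a ^ (j + 1) * b ^ (k + 1) = a ^ j * (a * b) * b ^ k := by
        rw [pow_succ, pow_succ', mul_assoc, mul_assoc, mul_assoc]
    _ = c • (a ^ (j + 1) * b ^ k - a ^ j * b ^ (k + 1)) := by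
        rw [h, mul_smul_comm, smul_mul_assoc, mul_sub, sub_mul, ← pow_succ, mul_assoc, ← pow_succ']

theorem Matrix.inv_add_smul_one_mul_inv_add_smul_one {ι K : Type*} [Fintype ι] [DecidableEq ι]
    [Field K] {A : Matrix ι ι K} {τ₁ τ₂ : K} (hτ : τ₁ ≠ τ₂)
    (h₁ : IsUnit (A + τ₁ • (1 : Matrix ι ι K))) (h₂ : IsUnit (A + τ₂ • (1 : Matrix ι ι K))) :
    (A + τ₁ • 1)⁻¹ * (A + τ₂ • 1)⁻¹ = (τ₂ - τ₁)⁻¹ • ((A + τ₁ • 1)⁻¹ - (A + τ₂ • 1)⁻¹) := by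
  have hshift : A + τ₂ • 1 - (A + τ₁ • 1) = (τ₂ - τ₁) • (1 : Matrix ι ι K) := by
    rw [sub_smul]; abel
  rw [inv_sub_inv (iff_of_true h₁ h₂), hshift, Matrix.mul_smul, Matrix.mul_one, Matrix.smul_mul,
    smul_smul, inv_mul_cancel₀ (sub_ne_zero.mpr hτ.symm), one_smul]

section Krylov

variable {K : Type*} [Field K] {n : ℕ}

theorem krylov_mono {m m' : ℕ} (h : m ≤ m') (B : Matrix (Fin n) (Fin n) K) (w : Fin n → K) :
    krylov m B w ≤ krylov m' B w :=
  Submodule.span_mono <| by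
    rintro _ ⟨k, rfl⟩
    exact ⟨Fin.castLE h k, rfl⟩

theorem pow_succ_mulVec_mem_krylov_succ (B : Matrix (Fin n) (Fin n) K) (v : Fin n → K) (j : ℕ) :
    (B ^ (j + 1)) *ᵥ v ∈ krylov (j + 1) B (B *ᵥ v) := by
  rw [pow_succ, ← mulVec_mulVec]
  exact Submodule.subset_span ⟨Fin.last j, rfl⟩

theorem pow_mul_pow_mulVec_mem_krylov_sup {Q₁ Q₂ : Matrix (Fin n) (Fin n) K} {c : K}
    (h : Q₁ * Q₂ = c • (Q₁ - Q₂)) (v : Fin n → K) (j k : ℕ) (hjk : j + k ≠ 0) :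
    (Q₁ ^ j * Q₂ ^ k) *ᵥ v ∈ krylov j Q₁ (Q₁ *ᵥ v) ⊔ krylov k Q₂ (Q₂ *ᵥ v) := by
  induction j generalizing k with
  | zero =>
    obtain ⟨k, rfl⟩ := Nat.exists_eq_succ_of_ne_zero (by simpa using hjk)
    rw [pow_zero, Matrix.one_mul]
    exact Submodule.mem_sup_right (pow_succ_mulVec_mem_krylov_succ Q₂ v k)
  | succ j ihj =>
    induction k with
    | zero =>
      rw [pow_zero, Matrix.mul_one]
      exact Submodule.mem_sup_left (pow_succ_mulVec_mem_krylov_succ Q₁ v j)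
    | succ k ihk =>
      rw [pow_succ_mul_pow_succ_of_mul_eq_smul_sub h, smul_mulVec, sub_mulVec]
      refine Submodule.smul_mem _ _ (Submodule.sub_mem _ ?_ ?_)
      · exact SetLike.le_def.mp (sup_le_sup_left (krylov_mono k.le_succ _ _) _)
          (ihk (by omega))
      · exact SetLike.le_def.mp (sup_le_sup_right (krylov_mono j.le_succ _ _) _)
          (ihj (k + 1) (by omega))

end Krylov

theorem cross_powers_in_krylov_sum_general {K : Type*} [Field K] {n : ℕ}
    (A : Matrix (Fin n) (Fin n) K) (τ₁ τ₂ : K) (hτ : τ₁ ≠ τ₂)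
    (h1 : IsUnit (A + τ₁ • (1 : Matrix (Fin n) (Fin n) K)))
    (h2 : IsUnit (A + τ₂ • (1 : Matrix (Fin n) (Fin n) K)))
    (m p : ℕ) (hm : 0 < m) (v : Fin n → K) :
    ((A + τ₁ • 1)⁻¹ ^ m * (A + τ₂ • 1)⁻¹ ^ p) *ᵥ v ∈
      krylov m (A + τ₁ • 1)⁻¹ ((A + τ₁ • 1)⁻¹ *ᵥ v) ⊔
        krylov p (A + τ₂ • 1)⁻¹ ((A + τ₂ • 1)⁻¹ *ᵥ v) :=
  pow_mul_pow_mulVec_mem_krylov_sup (inv_add_smul_one_mul_inv_add_smul_one hτ h1 h2) v m p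
    (by omega)

theorem cross_powers_in_krylov_sum {K : Type*} [Field K] {n : ℕ}
    (A : Matrix (Fin n) (Fin n) K) (τ₁ τ₂ : K) (hτ : τ₁ ≠ τ₂)
    (h1 : IsUnit (A + τ₁ • (1 : Matrix (Fin n) (Fin n) K)))
    (h2 : IsUnit (A + τ₂ • (1 : Matrix (Fin n) (Fin n) K)))
    (m p : ℕ) (hm : 0 < m) (hp : 0 < p) (v : Fin n → K) :
    ((A + τ₁ • 1)⁻¹ ^ m * (A + τ₂ • 1)⁻¹ ^ p) *ᵥ v ∈
      krylov m (A + τ₁ • 1)⁻¹ ((A + τ₁ • 1)⁻¹ *ᵥ v) ⊔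
        krylov p (A + τ₂ • 1)⁻¹ ((A + τ₂ • 1)⁻¹ *ᵥ v) :=
  cross_powers_in_krylov_sum_general A τ₁ τ₂ hτ h1 h2 m p hm v
end

section
/- Let A be a square matrix, τ₁, …, τ_{n_p} pairwise distinct scalars with each A + τⱼI invertible, Pⱼ⁻¹ = (A + τⱼI)⁻¹, and b a vector. Then every vector of the form q(P₁⁻¹, …, P_{n_p}⁻¹)b, where q is a multivariate non-commuting polynomial of degree at most m with q(0, …, 0) = 1, can be written as b + ∑_{j=1}^{n_p} pⱼ(Pⱼ⁻¹)Pⱼ⁻¹b for single-variable polynomials pⱼ of degree at most m − 1. -/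
/-! The resolvent identity `Pᵢ Pⱼ = (τⱼ - τᵢ)⁻¹ (Pᵢ - Pⱼ)` for `i ≠ j` lets a factor `Pᵢ` be
pushed past powers of `Pⱼ`: inductively `Pᵢ Pⱼ^(k+1) ∈ span {Pᵢ, Pⱼ, …, Pⱼ^(k+1)}`. Hence left
multiplication by any `Pᵢ` maps `∑ⱼ {q(Pⱼ) Pⱼ : deg q ≤ d}` into the same space with `d + 1`, and
a word of length `k + 1` in the `Pⱼ` lands in degree `k`. -/

open Matrix Polynomial Submodule

section PowSpan

variable (K : Type*) {R : Type*} [CommSemiring K] [Semiring R] [Algebra K R]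

-- `powSpan K a d = {q(a) * a | q.natDegree ≤ d}`
def powSpan (a : R) (d : ℕ) : Submodule K R :=
  span K ((fun l => a ^ (l + 1)) '' Set.Iic d)

variable {K}

theorem pow_succ_mem_powSpan (a : R) {l d : ℕ} (hl : l ≤ d) : a ^ (l + 1) ∈ powSpan K a d :=
  subset_span ⟨l, hl, rfl⟩

theorem self_mem_powSpan (a : R) (d : ℕ) : a ∈ powSpan K a d := by
  simpa using pow_succ_mem_powSpan (K := K) a d.zero_le

theorem powSpan_mono (a : R) : Monotone (powSpan K a) :=
  fun _ _ hd => span_mono (Set.image_mono (Set.Iic_subset_Iic.mpr hd))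

theorem mul_mem_powSpan_succ {a x : R} {d : ℕ} (hx : x ∈ powSpan K a d) :
    x * a ∈ powSpan K a (d + 1) := by
  have : map (LinearMap.mulRight K a) (powSpan K a d) ≤ powSpan K a (d + 1) := by
    rw [powSpan, map_span_le]
    rintro _ ⟨l, hl, rfl⟩
    simpa [← pow_succ] using pow_succ_mem_powSpan a (Nat.succ_le_succ hl)
  exact this (mem_map_of_mem hx)

theorem mul_pow_succ_mem_sup_powSpan {a b : R} {s t : K} (hab : a * b = s • a + t • b) (k : ℕ) :
    a * b ^ (k + 1) ∈ K ∙ a ⊔ powSpan K b k := by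
  induction k with
  | zero =>
    rw [zero_add, pow_one, hab]
    exact add_mem (mem_sup_left (smul_mem _ _ (mem_span_singleton_self a)))
      (mem_sup_right (smul_mem _ _ (self_mem_powSpan b 0)))
  | succ k ih =>
    obtain ⟨x, hx, y, hy, hxy⟩ := mem_sup.mp ih
    obtain ⟨r, rfl⟩ := mem_span_singleton.mp hx
    have hsplit : a * b ^ (k + 1 + 1) = (r * s) • a + ((r * t) • b + y * b) := by
      rw [pow_succ, ← mul_assoc, ← hxy, add_mul, smul_mul_assoc, hab, smul_add, smul_smul,
        smul_smul, add_assoc]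
    rw [hsplit]
    exact add_mem (mem_sup_left (smul_mem _ _ (mem_span_singleton_self a)))
      (mem_sup_right (add_mem (smul_mem _ _ (self_mem_powSpan b _)) (mul_mem_powSpan_succ hy)))

variable {ι : Type*} {P : ι → R}

theorem mul_pow_succ_mem_iSup_powSpan
    (hmul : ∀ i j, i ≠ j → ∃ s t : K, P i * P j = s • P i + t • P j) (i j : ι) (l : ℕ) :
    P i * P j ^ (l + 1) ∈ ⨆ k, powSpan K (P k) (l + 1) := by
  have hle k : powSpan K (P k) (l + 1) ≤ ⨆ k, powSpan K (P k) (l + 1) :=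
    le_iSup (fun k => powSpan K (P k) (l + 1)) k
  obtain rfl | hij := eq_or_ne i j
  · rw [← pow_succ']
    exact hle i (pow_succ_mem_powSpan _ le_rfl)
  · obtain ⟨s, t, hst⟩ := hmul i j hij
    refine sup_le ?_ ((powSpan_mono _ l.le_succ).trans (hle j)) (mul_pow_succ_mem_sup_powSpan hst l)
    exact (span_le.mpr (Set.singleton_subset_iff.mpr (self_mem_powSpan _ _))).trans (hle i)

theorem mul_mem_iSup_powSpan_succ
    (hmul : ∀ i j, i ≠ j → ∃ s t : K, P i * P j = s • P i + t • P j)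
    (i : ι) {d : ℕ} {x : R} (hx : x ∈ ⨆ j, powSpan K (P j) d) :
    P i * x ∈ ⨆ j, powSpan K (P j) (d + 1) := by
  induction hx using iSup_induction' with
  | zero => simp
  | add x y _ _ hx hy => simpa [mul_add] using add_mem hx hy
  | mem j x hx =>
    have : map (LinearMap.mulLeft K (P i)) (powSpan K (P j) d) ≤ ⨆ j, powSpan K (P j) (d + 1) := by
      rw [powSpan, map_span_le]
      rintro _ ⟨l, hl, rfl⟩
      exact iSup_mono (fun k => powSpan_mono (P k) (Nat.succ_le_succ hl))
        (mul_pow_succ_mem_iSup_powSpan hmul i j l)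
    exact this (mem_map_of_mem hx)

theorem prod_map_cons_mem_iSup_powSpan
    (hmul : ∀ i j, i ≠ j → ∃ s t : K, P i * P j = s • P i + t • P j) (i : ι) (w : List ι) :
    ((i :: w).map P).prod ∈ ⨆ j, powSpan K (P j) w.length := by
  induction w generalizing i with
  | nil => simpa using mem_iSup_of_mem (p := fun j => powSpan K (P j) 0) i (self_mem_powSpan _ _)
  | cons j w ih =>
    rw [List.map_cons, List.prod_cons]
    exact mul_mem_iSup_powSpan_succ hmul i (ih j)

theorem exists_aeval_mul_eq_of_mem_powSpan {a x : R} {d : ℕ} (hx : x ∈ powSpan K a d) :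
    ∃ q : K[X], q.natDegree ≤ d ∧ aeval a q * a = x := by
  induction hx using span_induction with
  | mem _ h =>
    obtain ⟨l, hl, rfl⟩ := h
    exact ⟨X ^ l, (natDegree_X_pow_le l).trans hl, by simp [pow_succ]⟩
  | zero => exact ⟨0, by simp, by simp⟩
  | add x y _ _ hx hy =>
    obtain ⟨p, hp, rfl⟩ := hx
    obtain ⟨q, hq, rfl⟩ := hy
    exact ⟨p + q, natDegree_add_le_of_degree_le hp hq, by simp [add_mul]⟩
  | smul r x _ hx =>
    obtain ⟨p, hp, rfl⟩ := hx
    exact ⟨r • p, (natDegree_smul_le r p).trans hp, by simp⟩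

theorem exists_sum_aeval_mul_eq_of_mem_iSup_powSpan [Fintype ι] {x : R} {d : ℕ}
    (hx : x ∈ ⨆ j, powSpan K (P j) d) :
    ∃ p : ι → K[X], (∀ j, (p j).natDegree ≤ d) ∧ ∑ j, aeval (P j) (p j) * P j = x := by
  classical
  induction hx using iSup_induction' with
  | zero => exact ⟨0, by simp, by simp⟩
  | add x y _ _ hx hy =>
    obtain ⟨p, hp, rfl⟩ := hx
    obtain ⟨q, hq, rfl⟩ := hy
    exact ⟨p + q, fun j => natDegree_add_le_of_degree_le (hp j) (hq j),
      by simp [add_mul, Finset.sum_add_distrib]⟩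
  | mem j x hx =>
    obtain ⟨q, hq, rfl⟩ := exists_aeval_mul_eq_of_mem_powSpan hx
    refine ⟨Pi.single j q, fun k => ?_, ?_⟩
    · by_cases hk : k = j
      · subst hk; simpa using hq
      · simp [hk]
    · rw [Fintype.sum_eq_single j fun k hk => by simp [hk]]
      simp

end PowSpan

theorem mul_eq_smul_sub_of_mul_eq_one {K R : Type*} [Field K] [Ring R] [Algebra K R]
    {A P Q : R} {s t : K} (hst : s ≠ t) (hP : P * (A + s • 1) = 1) (hQ : (A + t • 1) * Q = 1) :
    P * Q = (t - s)⁻¹ • (P - Q) := by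
  have hsub : P - Q = (t - s) • (P * Q) :=
    calc P - Q = P * ((A + t • 1) * Q) - P * (A + s • 1) * Q := by rw [hP, hQ, mul_one, one_mul]
      _ = (t - s) • (P * Q) := by
        simp only [sub_smul, mul_add, add_mul, mul_smul_comm, smul_mul_assoc, one_mul, mul_assoc]
        abel
  rw [hsub, smul_smul, inv_mul_cancel₀ (sub_ne_zero.mpr hst.symm), one_smul]

theorem noncommuting_poly_reduction {K : Type*} [Field K] {n np : ℕ}
    (A : Matrix (Fin n) (Fin n) K) (τ : Fin np → K)
    (hτ : ∀ i j, i ≠ j → τ i ≠ τ j)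
    (hU : ∀ j, IsUnit (A + τ j • (1 : Matrix (Fin n) (Fin n) K)))
    (P : Fin np → Matrix (Fin n) (Fin n) K)
    (hP : ∀ j, P j = (A + τ j • 1)⁻¹)
    (b : Fin n → K) (m : ℕ)
    (S : Finset (List (Fin np)))
    (hS : ∀ w ∈ S, w ≠ [] ∧ w.length ≤ m)
    (c : List (Fin np) → K) :
    ∃ p : Fin np → Polynomial K,
      (∀ j, (p j).natDegree ≤ m - 1) ∧
      b + ∑ w ∈ S, c w • ((w.map P).prod *ᵥ b) =
        b + ∑ j, (Polynomial.aeval (P j) (p j) : Matrix (Fin n) (Fin n) K) *ᵥ (P j *ᵥ b) := by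
  have hdet j := (isUnit_iff_isUnit_det _).mp (hU j)
  have hres i j (hij : i ≠ j) : ∃ s t : K, P i * P j = s • P i + t • P j := by
    refine ⟨(τ j - τ i)⁻¹, -(τ j - τ i)⁻¹, ?_⟩
    rw [mul_eq_smul_sub_of_mul_eq_one (hτ i j hij) (by rw [hP]; exact nonsing_inv_mul _ (hdet i))
      (by rw [hP]; exact mul_nonsing_inv _ (hdet j)), smul_sub, neg_smul, sub_eq_add_neg]
  have hmem : ∑ w ∈ S, c w • (w.map P).prod ∈ ⨆ j, powSpan K (P j) (m - 1) := by
    refine sum_mem fun w hw => smul_mem _ _ ?_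
    obtain ⟨hne, hlen⟩ := hS w hw
    obtain ⟨i, w', rfl⟩ := List.exists_cons_of_ne_nil hne
    refine iSup_mono (fun j => powSpan_mono (P j) ?_) (prod_map_cons_mem_iSup_powSpan hres i w')
    simp only [List.length_cons] at hlen
    omega
  obtain ⟨p, hdeg, hp⟩ := exists_sum_aeval_mul_eq_of_mem_iSup_powSpan hmem
  refine ⟨p, hdeg, ?_⟩
  simp only [mulVec_mulVec, ← smul_mulVec, ← sum_mulVec, hp]
end

section
/- Let A be a square matrix, τ₁ ≠ τ₂ scalars with A + τ₁I, A + τ₂I invertible, Pⱼ⁻¹ = (A + τⱼI)⁻¹, and b a nonzero vector. Then the subalgebra of 𝕂^{n×n} generated by P₁⁻¹ and P₂⁻¹ applied to b equals 𝒦_∞(P₁⁻¹, b) + 𝒦_∞(P₂⁻¹, b), where 𝒦_∞(B, w) denotes the span of {Bᵏw : k ≥ 0}. -/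
open Matrix

/-- The full Krylov subspace 𝒦_∞(B, w) = span{Bᵏw : k ∈ ℕ}. -/
def krylovInf {K : Type*} [Field K] {n : ℕ}
    (B : Matrix (Fin n) (Fin n) K) (w : Fin n → K) : Submodule K (Fin n → K) :=
  Submodule.span K (Set.range fun k : ℕ => (B ^ k) *ᵥ w)

/-! The resolvent identity `P₁P₂ = (τ₂ - τ₁)⁻¹ (P₁ - P₂)` lets `P₁` move `P₂ᵏ b` into
`𝒦_∞(P₁, b) + 𝒦_∞(P₂, b)` by induction on `k`, so this sum is invariant under both
resolvents. Being generated by their powers applied to `b`, it is then the smallest such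
invariant subspace containing `b`, which is the span of all words applied to `b`. -/

section Resolvent

variable {m α : Type*} [Fintype m] [DecidableEq m]

theorem Matrix.nonsing_inv_sub_nonsing_inv [CommRing α] {M₁ M₂ : Matrix m m α}
    (h₁ : IsUnit M₁) (h₂ : IsUnit M₂) : M₁⁻¹ - M₂⁻¹ = M₁⁻¹ * (M₂ - M₁) * M₂⁻¹ := by
  rw [isUnit_iff_isUnit_det] at h₁ h₂
  rw [Matrix.mul_sub, Matrix.sub_mul, mul_nonsing_inv_cancel_right _ _ h₂,
    nonsing_inv_mul _ h₁, Matrix.one_mul]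

theorem Matrix.resolvent_mul_resolvent [Field α] (A : Matrix m m α) {τ₁ τ₂ : α}
    (hτ : τ₁ ≠ τ₂) (h₁ : IsUnit (A + τ₁ • 1)) (h₂ : IsUnit (A + τ₂ • 1)) :
    (A + τ₁ • 1)⁻¹ * (A + τ₂ • 1)⁻¹ = (τ₂ - τ₁)⁻¹ • ((A + τ₁ • 1)⁻¹ - (A + τ₂ • 1)⁻¹) := by
  rw [nonsing_inv_sub_nonsing_inv h₁ h₂, add_sub_add_left_eq_sub, ← sub_smul,
    Matrix.mul_smul, Matrix.mul_one, Matrix.smul_mul, smul_smul,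
    inv_mul_cancel₀ (sub_ne_zero.mpr hτ.symm), one_smul]

end Resolvent

section Krylov

variable {K : Type*} [Field K] {n : ℕ}

theorem pow_mulVec_mem_krylovInf (B : Matrix (Fin n) (Fin n) K) (w : Fin n → K) (k : ℕ) :
    (B ^ k) *ᵥ w ∈ krylovInf B w :=
  Submodule.subset_span ⟨k, rfl⟩

theorem self_mem_krylovInf (B : Matrix (Fin n) (Fin n) K) (w : Fin n → K) :
    w ∈ krylovInf B w := by
  simpa using pow_mulVec_mem_krylovInf B w 0

theorem krylovInf_le_comap_mulVecLin (B : Matrix (Fin n) (Fin n) K) (w : Fin n → K) :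
    krylovInf B w ≤ (krylovInf B w).comap B.mulVecLin := by
  refine Submodule.span_le.mpr ?_
  rintro _ ⟨k, rfl⟩
  simpa [mulVec_mulVec, ← pow_succ'] using pow_mulVec_mem_krylovInf B w (k + 1)

theorem krylovInf_le_comap_mulVecLin_sup {B C : Matrix (Fin n) (Fin n) K} {c : K}
    (hBC : B * C = c • (B - C)) (w : Fin n → K) :
    krylovInf C w ≤ (krylovInf B w ⊔ krylovInf C w).comap B.mulVecLin := by
  refine Submodule.span_le.mpr ?_
  rintro _ ⟨k, rfl⟩
  induction k with
  | zero =>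
    simpa using Submodule.mem_sup_left (pow_mulVec_mem_krylovInf B w 1)
  | succ k ih =>
    have hstep : B *ᵥ ((C ^ (k + 1)) *ᵥ w) =
        c • (B *ᵥ ((C ^ k) *ᵥ w)) - c • ((C ^ (k + 1)) *ᵥ w) := by
      rw [mulVec_mulVec, pow_succ', ← mul_assoc, hBC, Matrix.smul_mul, Matrix.sub_mul,
        smul_sub, sub_mulVec, smul_mulVec, smul_mulVec, mulVec_mulVec]
    simp only [SetLike.mem_coe, Submodule.mem_comap, mulVecLin_apply] at ih ⊢
    rw [hstep]
    exact Submodule.sub_mem _ (Submodule.smul_mem _ _ ih)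
      (Submodule.smul_mem _ _ (Submodule.mem_sup_right (pow_mulVec_mem_krylovInf C w _)))

theorem mulVec_mem_krylovInf_sup {B C : Matrix (Fin n) (Fin n) K} {c : K}
    (hBC : B * C = c • (B - C)) (w : Fin n → K) {x : Fin n → K}
    (hx : x ∈ krylovInf B w ⊔ krylovInf C w) : B *ᵥ x ∈ krylovInf B w ⊔ krylovInf C w :=
  sup_le ((krylovInf_le_comap_mulVecLin B w).trans (Submodule.comap_mono le_sup_left))
    (krylovInf_le_comap_mulVecLin_sup hBC w) hx

end Krylov

section Words

variable {K ι : Type*} [Field K] {n : ℕ} (P : ι → Matrix (Fin n) (Fin n) K) (b : Fin n → K)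

theorem span_list_prod_mulVec_le {S : Submodule K (Fin n → K)} (hb : b ∈ S)
    (hS : ∀ i, ∀ x ∈ S, P i *ᵥ x ∈ S) :
    Submodule.span K {x | ∃ w : List ι, x = (w.map P).prod *ᵥ b} ≤ S := by
  refine Submodule.span_le.mpr ?_
  rintro _ ⟨w, rfl⟩
  induction w with
  | nil => simpa using hb
  | cons i w ih => simpa [← mulVec_mulVec] using hS i _ ih

theorem krylovInf_le_span_list_prod_mulVec (i : ι) :
    krylovInf (P i) b ≤ Submodule.span K {x | ∃ w : List ι, x = (w.map P).prod *ᵥ b} := by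
  refine Submodule.span_le.mpr ?_
  rintro _ ⟨k, rfl⟩
  exact Submodule.subset_span ⟨List.replicate k i, by simp [List.prod_replicate]⟩

end Words

theorem word_algebra_eq_krylov_sum_general {K : Type*} [Field K] {n : ℕ}
    (A : Matrix (Fin n) (Fin n) K) (τ₁ τ₂ : K) (hτ : τ₁ ≠ τ₂)
    (h1 : IsUnit (A + τ₁ • (1 : Matrix (Fin n) (Fin n) K)))
    (h2 : IsUnit (A + τ₂ • (1 : Matrix (Fin n) (Fin n) K)))
    (b : Fin n → K)
    (P : Fin 2 → Matrix (Fin n) (Fin n) K)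
    (hP1 : P 0 = (A + τ₁ • 1)⁻¹) (hP2 : P 1 = (A + τ₂ • 1)⁻¹) :
    Submodule.span K {x | ∃ w : List (Fin 2), x = (w.map P).prod *ᵥ b} =
      krylovInf (A + τ₁ • 1)⁻¹ b ⊔ krylovInf (A + τ₂ • 1)⁻¹ b := by
  have h₁₂ := A.resolvent_mul_resolvent hτ h1 h2
  have h₂₁ := A.resolvent_mul_resolvent hτ.symm h2 h1
  refine le_antisymm (span_list_prod_mulVec_le P b
    (Submodule.mem_sup_left (self_mem_krylovInf _ b)) (Fin.forall_fin_two.mpr ⟨?_, ?_⟩)) ?_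
  · intro x hx
    rw [hP1]
    exact mulVec_mem_krylovInf_sup h₁₂ b hx
  · intro x hx
    rw [hP2]
    rw [sup_comm] at hx ⊢
    exact mulVec_mem_krylovInf_sup h₂₁ b hx
  · rw [← hP1, ← hP2]
    exact sup_le (krylovInf_le_span_list_prod_mulVec P b 0)
      (krylovInf_le_span_list_prod_mulVec P b 1)

theorem word_algebra_eq_krylov_sum {K : Type*} [Field K] {n : ℕ}
    (A : Matrix (Fin n) (Fin n) K) (τ₁ τ₂ : K) (hτ : τ₁ ≠ τ₂)
    (h1 : IsUnit (A + τ₁ • (1 : Matrix (Fin n) (Fin n) K)))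
    (h2 : IsUnit (A + τ₂ • (1 : Matrix (Fin n) (Fin n) K)))
    (b : Fin n → K) (hb : b ≠ 0)
    (P : Fin 2 → Matrix (Fin n) (Fin n) K)
    (hP1 : P 0 = (A + τ₁ • 1)⁻¹) (hP2 : P 1 = (A + τ₂ • 1)⁻¹) :
    Submodule.span K {x | ∃ w : List (Fin 2), x = (w.map P).prod *ᵥ b} =
      krylovInf (A + τ₁ • 1)⁻¹ b ⊔ krylovInf (A + τ₂ • 1)⁻¹ b :=
  word_algebra_eq_krylov_sum_general A τ₁ τ₂ hτ h1 h2 b P hP1 hP2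
end
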